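/- With φ(0) = I₂ and φ(k) = diag(0,1) for k ≥ 1, the (i,j) entry of the inverse of the semi-infinite block Toeplitz matrix B_{nn}(i,j) = B(i−j) (with B(0)=diag(1,2), B(±1)=diag(0,−1), B(k)=0 for |k|≥2) is B_{nn}^{−1}(i,j) = Σ_{l=0}^{min(i,j)} φ(i−l)* φ(j−l) = diag(δ_{ij}, min(i,j)+1) for i,j ≥ 0. In particular B_{nn}^{−1}(0,0) = I₂. -/

import Mathlib

/-!
Everything is diagonal. In the first coordinate `B_{nn}` and `G` are the identity. In the second,
`B_{nn}` is the second-difference operator `tridiag(-1, 2, -1)` on `ℕ` with Dirichlet condition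
at `-1`, and `G i j = min i j + 1` (a sum of `min i j + 1` products `φ(·)ᴴ φ(·)`, each `1` there)
is its Green's function: the second difference of `l ↦ min l j + 1` is `δ_{lj}`. As `B` is
tridiagonal, each entry of `B_{nn} G` and of `G B_{nn}` is a sum of three terms.
-/

open Matrix Finset

theorem sum_range_eq_of_eq_zero_off_nbhd {M : Type*} [AddCommMonoid M] (h : ℕ → M) {i N : ℕ}
    (hN : i + 2 ≤ N) (hh : ∀ l, l + 1 < i ∨ i + 1 < l → h l = 0) :
    ∑ l ∈ range N, h l = h i + h (i + 1) + if i = 0 then 0 else h (i - 1) := by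
  have hfar : ∑ l ∈ Ico (i + 2) N, h l = 0 :=
    sum_eq_zero fun l hl => hh l (.inr (by simp at hl; omega))
  have hbelow : ∑ l ∈ range i, h l = if i = 0 then 0 else h (i - 1) := by
    rcases i with _ | k
    · simp
    · rw [sum_range_succ, sum_eq_zero fun l hl => hh l (.inl (by simp at hl; omega))]
      simp
  rw [← sum_range_add_sum_Ico h hN, hfar, sum_range_succ, sum_range_succ, hbelow]
  abel

section Tridiagonal

variable {R : Type*} [NonUnitalNonAssocSemiring R] (b : ℤ → R)

theorem sum_range_toeplitz_mul_of_tridiagonal (hb : ∀ k, 2 ≤ |k| → b k = 0) (f : ℕ → R)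
    {i N : ℕ} (hN : i + 2 ≤ N) :
    ∑ l ∈ range N, b (i - l) * f l =
      b 0 * f i + b (-1) * f (i + 1) + if i = 0 then 0 else b 1 * f (i - 1) := by
  rw [sum_range_eq_of_eq_zero_off_nbhd _ hN fun l hl => by
    rw [hb _ (le_abs.mpr (by omega)), zero_mul]]
  push_cast
  rw [sub_self, sub_add_cancel_left]
  split_ifs with hi
  · rfl
  · rw [Nat.cast_pred (Nat.pos_of_ne_zero hi), sub_sub_cancel]

theorem sum_range_mul_toeplitz_of_tridiagonal (hb : ∀ k, 2 ≤ |k| → b k = 0) (f : ℕ → R)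
    {j N : ℕ} (hN : j + 2 ≤ N) :
    ∑ l ∈ range N, f l * b (l - j) =
      f j * b 0 + f (j + 1) * b 1 + if j = 0 then 0 else f (j - 1) * b (-1) := by
  rw [sum_range_eq_of_eq_zero_off_nbhd _ hN fun l hl => by
    rw [hb _ (le_abs.mpr (by omega)), mul_zero]]
  push_cast
  rw [sub_self, add_sub_cancel_left]
  split_ifs with hj
  · rfl
  · rw [Nat.cast_pred (Nat.pos_of_ne_zero hj), sub_sub_cancel_left]

end Tridiagonal

section Green

variable {R : Type*} [CommRing R]

def greenMatrix (i j : ℕ) : Matrix (Fin 2) (Fin 2) R :=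
  diagonal ![if i = j then 1 else 0, ((min i j : ℕ) : R) + 1]

theorem greenMatrix_comm (i j : ℕ) :
    greenMatrix i j = (greenMatrix j i : Matrix (Fin 2) (Fin 2) R) := by
  simp only [greenMatrix, eq_comm (a := i), min_comm]

theorem greenMatrix_zero_zero : greenMatrix 0 0 = (1 : Matrix (Fin 2) (Fin 2) R) := by
  ext a c; fin_cases a <;> fin_cases c <;> simp [greenMatrix]

theorem greenMatrix_mul_diagonal (i j : ℕ) (v : Fin 2 → R) :
    greenMatrix i j * diagonal v = diagonal v * greenMatrix j i := by
  rw [greenMatrix_comm]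
  exact (commute_diagonal _ _).eq

/-- The `if i = 0` term is the boundary value `0` at `l = -1`; the identity is written without
subtraction. -/
theorem two_mul_min_add_one (i j : ℕ) :
    2 * (min i j + 1) =
      min (i + 1) j + 1 + (if i = 0 then 0 else min (i - 1) j + 1) + if i = j then 1 else 0 := by
  split_ifs <;> omega

theorem laplacian_mul_greenMatrix (i j : ℕ) :
    diagonal ![1, 2] * greenMatrix i j + diagonal ![0, -1] * greenMatrix (i + 1) j
      + (if i = 0 then 0 else diagonal ![0, -1] * greenMatrix (i - 1) j)
      = (if i = j then 1 else 0 : Matrix (Fin 2) (Fin 2) R) := by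
  have h := congrArg (Nat.cast : ℕ → R) (two_mul_min_add_one i j)
  push_cast [apply_ite (Nat.cast : ℕ → R)] at h
  split_ifs at h ⊢ with hi hij hij <;> ext a c <;> fin_cases a <;> fin_cases c <;>
    simp [greenMatrix, hij] at h ⊢ <;> linear_combination h

theorem sum_conjTranspose_mul_eq_greenMatrix [StarRing R] (φ : ℕ → Matrix (Fin 2) (Fin 2) R)
    (hφ0 : φ 0 = 1) (hφ : ∀ k, 1 ≤ k → φ k = diagonal ![0, 1]) (i j : ℕ) :
    ∑ l ∈ range (min i j + 1), (φ (i - l))ᴴ * φ (j - l) = greenMatrix i j := by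
  have hφ' : ∀ k, φ k = diagonal ![if k = 0 then 1 else 0, 1] := by
    rintro (_ | k)
    · rw [hφ0, ← diagonal_one]
      congr; ext a; fin_cases a <;> rfl
    · simp [hφ _ k.succ_pos]
  have hterm : ∀ a b, (φ a)ᴴ * φ b = diagonal ![if a = 0 ∧ b = 0 then 1 else 0, 1] := by
    intro a b
    rw [hφ', hφ', diagonal_conjTranspose, diagonal_mul_diagonal]
    congr; ext c; fin_cases c <;> split_ifs <;> simp_all
  have hbulk : ∀ l ∈ range (min i j), (φ (i - l))ᴴ * φ (j - l) = diagonal ![0, 1] := by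
    intro l hl
    rw [hterm, if_neg (by simp at hl; omega)]
  rw [sum_range_succ, sum_congr rfl hbulk, sum_const, card_range, hterm]
  simp only [show i - min i j = 0 ∧ j - min i j = 0 ↔ i = j by omega]
  ext a c; fin_cases a <;> fin_cases c <;> simp [greenMatrix, Matrix.natCast_apply]

end Green

/-- The inverse of the semi-infinite block Toeplitz matrix `B_{nn}(i,j) = B(i−j)`
(with `B(0) = diag(1,2)`, `B(±1) = diag(0,−1)`, `B(k) = 0` for `|k| ≥ 2`) has entries
`B_{nn}⁻¹(i,j) = Σ_{l=0}^{min(i,j)} φ(i−l)* φ(j−l) = diag(δ_{ij}, min(i,j)+1)`, i.e. the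
operator `G` with these entries satisfies `B_{nn}G = GB_{nn} = I` (the products are
finite-band block sums).  In particular `B_{nn}⁻¹(0,0) = I₂`. -/
theorem toeplitz_inverse_entries
    (φ : ℕ → Matrix (Fin 2) (Fin 2) ℂ)
    (hφ0 : φ 0 = 1) (hφ : ∀ k, 1 ≤ k → φ k = Matrix.diagonal ![0, 1])
    (B : ℤ → Matrix (Fin 2) (Fin 2) ℂ)
    (hB0 : B 0 = Matrix.diagonal ![1, 2])
    (hB1 : B 1 = Matrix.diagonal ![0, -1])
    (hBm1 : B (-1) = Matrix.diagonal ![0, -1])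
    (hBk : ∀ k : ℤ, 2 ≤ |k| → B k = 0)
    (G : ℕ → ℕ → Matrix (Fin 2) (Fin 2) ℂ)
    (hG : ∀ i j : ℕ, G i j = ∑ l ∈ Finset.range (min i j + 1), (φ (i - l))ᴴ * φ (j - l)) :
    (∀ i j : ℕ, G i j = Matrix.diagonal ![if i = j then 1 else 0, ((min i j : ℕ) : ℂ) + 1]) ∧
    (∀ i j : ℕ,
      ∑ l ∈ Finset.range (max i j + 2), B ((i : ℤ) - l) * G l j = if i = j then 1 else 0) ∧
    (∀ i j : ℕ,
      ∑ l ∈ Finset.range (max i j + 2), G i l * B ((l : ℤ) - j) = if i = j then 1 else 0) ∧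
    G 0 0 = 1 := by
  have hGreen : ∀ i j, G i j = greenMatrix i j := fun i j => by
    rw [hG, sum_conjTranspose_mul_eq_greenMatrix φ hφ0 hφ]
  refine ⟨hGreen, fun i j => ?_, fun i j => ?_, by rw [hGreen, greenMatrix_zero_zero]⟩
  · rw [sum_range_toeplitz_mul_of_tridiagonal B hBk _ (by omega), hB0, hB1, hBm1]
    simp only [hGreen]
    exact laplacian_mul_greenMatrix i j
  · rw [sum_range_mul_toeplitz_of_tridiagonal B hBk _ (by omega), hB0, hB1, hBm1]
    simp only [hGreen, greenMatrix_mul_diagonal]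
    rw [laplacian_mul_greenMatrix]
    exact if_congr eq_comm rfl rfl
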